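/- Let {e₁,…,eₙ} be an orthonormal basis of an n-dimensional real inner product space V (n ≥ 2), and fix distinct indices i ≠ j. Consider the operator T = (ε(eᵢ)ι(eᵢ) - ι(eᵢ)ε(eᵢ))·(ε(eⱼ)ι(eⱼ) - ι(eⱼ)ε(eⱼ)) on the degree-m part Λᵐ(V). Then trace of T on Λᵐ(V) equals C(n-2, m-2) + C(n-2, m) - 2·C(n-2, m-1), where C(a,b) denotes the binomial coefficient (with C(a,b) = 0 when b < 0 or b > a). -/

import Mathlib

/-!
For a unit vector `u`, the operator `K u = ε(u)ι(u) - ι(u)ε(u)` fixes `u ∧ y` for every `y` and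
commutes with `ε(v)` for `v ⟂ u`, while `K u 1 = -1`. Hence on the monomial basis
`e_s = e_{s₁} ∧ ⋯ ∧ e_{sₘ}` of `Λᵐ V`, `K(eᵢ)` acts by `+1` if `i ∈ s` and by `-1` otherwise, so
`K(eᵢ)K(eⱼ)` is diagonal and its trace is a signed count of `m`-subsets of `{1, …, n}`.
Writing the sign as `1 - 2[i ∉ s] - 2[j ∉ s] + 4[i, j ∉ s]` reduces the count to
`C(n, m) - 4 C(n-1, m) + 4 C(n-2, m)`, which Pascal's rule turns into the stated expression.
-/

open scoped RealInnerProductSpace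

variable {V : Type*} [NormedAddCommGroup V] [InnerProductSpace ℝ V]

/-- Exterior multiplication `ε(e) : ω ↦ e ∧ ω` on `Λ*(V)`. -/
noncomputable def extMul (e : V) : Module.End ℝ (ExteriorAlgebra ℝ V) :=
  LinearMap.mulLeft ℝ (ExteriorAlgebra.ι ℝ e)

/-- Interior multiplication (contraction) `ι(e)` on `Λ*(V)`. -/
noncomputable def intMul (e : V) : Module.End ℝ (ExteriorAlgebra ℝ V) :=
  CliffordAlgebra.contractLeft (Q := (0 : QuadraticForm ℝ V)) (innerₗ V e)

/-- `ε(e)ι(e) - ι(e)ε(e)` on `Λ*(V)`. -/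
noncomputable def K (e : V) : Module.End ℝ (ExteriorAlgebra ℝ V) :=
  extMul e * intMul e - intMul e * extMul e

namespace Finset

variable {α : Type*} [DecidableEq α]

theorem filter_powersetCard_disjoint (s t : Finset α) (m : ℕ) :
    (t.powersetCard m).filter (Disjoint s) = (t \ s).powersetCard m := by
  ext u
  simp only [mem_filter, mem_powersetCard, subset_sdiff]
  tauto

theorem sum_powersetCard_sign_mul_sign {s : Finset α} {i j : α} (hi : i ∈ s) (hj : j ∈ s)
    (hij : i ≠ j) (m : ℕ) :
    ∑ t ∈ s.powersetCard m, (if i ∈ t then (1 : ℝ) else -1) * (if j ∈ t then 1 else -1) =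
      (#s).choose m - 4 * (#s - 1).choose m + 4 * (#s - 2).choose m := by
  have sign_mul_sign (t : Finset α) :
      (if i ∈ t then (1 : ℝ) else -1) * (if j ∈ t then 1 else -1) =
        1 - 2 * (if Disjoint {i} t then 1 else 0) - 2 * (if Disjoint {j} t then 1 else 0) +
          4 * (if Disjoint {i, j} t then 1 else 0) := by
    simp only [disjoint_singleton_left, disjoint_insert_left]
    by_cases hit : i ∈ t <;> by_cases hjt : j ∈ t <;> simp [hit, hjt] <;> norm_num
  have card_disjoint (a : Finset α) (ha : a ⊆ s) :
      ∑ t ∈ s.powersetCard m, (if Disjoint a t then (1 : ℝ) else 0) = (#s - #a).choose m := by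
    rw [sum_boole, filter_powersetCard_disjoint, card_powersetCard, card_sdiff_of_subset ha]
  simp only [sign_mul_sign, sum_add_distrib, sum_sub_distrib, ← mul_sum]
  rw [card_disjoint _ (singleton_subset_iff.mpr hi), card_disjoint _ (singleton_subset_iff.mpr hj),
    card_disjoint _ (insert_subset hi (singleton_subset_iff.mpr hj)), card_pair hij,
    sum_const, card_powersetCard, card_singleton, card_singleton, nsmul_one]
  ring

end Finset

theorem Nat.cast_choose_add_two_sub_four_mul_add_four_mul (N m : ℕ) :
    ((N + 2).choose m : ℝ) - 4 * (N + 1).choose m + 4 * N.choose m =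
      (if 2 ≤ m then (N.choose (m - 2) : ℝ) else 0) + N.choose m -
        2 * (if 1 ≤ m then (N.choose (m - 1) : ℝ) else 0) := by
  match m with
  | 0 => norm_num
  | 1 =>
    norm_num [Nat.choose_one_right]
    ring
  | k + 2 =>
    rw [if_pos (by omega), if_pos (by omega), Nat.add_sub_cancel, Nat.choose_succ_succ (N + 1),
      Nat.choose_succ_succ N k, Nat.choose_succ_succ N (k + 1)]
    push_cast
    ring

theorem LinearMap.trace_eq_sum_of_apply_basis {R M ι : Type*} [CommRing R] [AddCommGroup M]
    [Module R M] [Fintype ι] [DecidableEq ι] (B : Module.Basis ι R M) (f : M →ₗ[R] M)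
    (c : ι → R) (hf : ∀ k, f (B k) = c k • B k) :
    LinearMap.trace R M f = ∑ k, c k := by
  rw [LinearMap.trace_eq_matrix_trace R B, Matrix.trace]
  refine Finset.sum_congr rfl fun k _ => ?_
  simp [LinearMap.toMatrix_apply, hf]

section ExteriorAlgebra

open ExteriorAlgebra

theorem intMul_ι_mul (u v : V) (x : ExteriorAlgebra ℝ V) :
    intMul u (ι ℝ v * x) = ⟪u, v⟫ • x - ι ℝ v * intMul u x :=
  CliffordAlgebra.contractLeft_ι_mul (Q := 0) (innerₗ V u) v x

theorem intMul_one (u : V) : intMul u (1 : ExteriorAlgebra ℝ V) = 0 :=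
  CliffordAlgebra.contractLeft_one (0 : QuadraticForm ℝ V) _

theorem K_one {u : V} (hu : ⟪u, u⟫ = 1) : K u 1 = -1 := by
  have h := intMul_ι_mul u u 1
  rw [hu, one_smul, intMul_one, mul_zero, sub_zero, mul_one] at h
  simp [K, extMul, intMul_one, h]

theorem K_ι_self_mul {u : V} (hu : ⟪u, u⟫ = 1) (y : ExteriorAlgebra ℝ V) :
    K u (ι ℝ u * y) = ι ℝ u * y := by
  simp only [K, extMul, LinearMap.sub_apply, Module.End.mul_apply, LinearMap.mulLeft_apply,
    intMul_ι_mul, hu, one_smul, mul_sub, ← mul_assoc, ι_sq_zero, zero_mul, map_zero,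
    sub_zero]

theorem K_ι_mul_of_inner_eq_zero {u v : V} (huv : ⟪u, v⟫ = 0) (y : ExteriorAlgebra ℝ V) :
    K u (ι ℝ v * y) = ι ℝ v * K u y := by
  have swap : ι ℝ u * ι ℝ v = -(ι ℝ v * ι ℝ u) := eq_neg_of_add_eq_zero_left (ι_add_mul_swap u v)
  have hcomm : ι ℝ u * (ι ℝ v * y) = -(ι ℝ v * (ι ℝ u * y)) := by
    rw [← mul_assoc, ← mul_assoc, swap, neg_mul]
  simp only [K, extMul, LinearMap.sub_apply, Module.End.mul_apply, LinearMap.mulLeft_apply,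
    hcomm, map_neg, intMul_ι_mul u v, huv, zero_smul, zero_sub, mul_sub, neg_neg]
  rw [← mul_assoc, swap, neg_mul, mul_assoc]
  abel

open scoped Classical in
theorem K_ιMulti {u : V} (hu : ⟪u, u⟫ = 1) {m : ℕ} (v : Fin m → V)
    (hv : ∀ k, v k = u ∨ ⟪u, v k⟫ = 0) :
    K u (ιMulti ℝ m v) = (if ∃ k, v k = u then (1 : ℝ) else -1) • ιMulti ℝ m v := by
  induction m with
  | zero => simp [ιMulti_zero_apply, K_one hu]
  | succ m ih =>
    simp only [ιMulti_succ_apply, Fin.exists_fin_succ]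
    rcases hv 0 with h0 | h0
    · simp [h0, K_ι_self_mul hu]
    · have hne : v 0 ≠ u := fun h => by rw [h, hu] at h0; exact one_ne_zero h0
      rw [K_ι_mul_of_inner_eq_zero h0, ih (Matrix.vecTail v) fun k => hv k.succ, mul_smul_comm]
      exact congrArg (· • _) (if_congr (by simp [hne, Matrix.vecTail]) rfl rfl)

theorem K_ιMulti_family {I : Type*} [LinearOrder I] {v : I → V} (hv : Orthonormal ℝ v) {m : ℕ}
    (i : I) (s : Set.powersetCard I m) :
    K (v i) (ιMulti_family ℝ m v s) =
      (if i ∈ s.val then (1 : ℝ) else -1) • ιMulti_family ℝ m v s := by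
  have hunit : ⟪v i, v i⟫ = 1 := by simpa using orthonormal_iff_ite.mp hv i i
  have hmem : (∃ k, (v ∘ Set.powersetCard.ofFinEmbEquiv.symm s) k = v i) ↔ i ∈ s.val := by
    simp only [Function.comp_apply, hv.linearIndependent.injective.eq_iff]
    exact Set.powersetCard.mem_range_ofFinEmbEquiv_symm_iff_mem s i
  rw [ιMulti_family, K_ιMulti hunit]
  · simp only [hmem]
  intro k
  rw [Function.comp_apply, orthonormal_iff_ite.mp hv]
  split_ifs with h <;> simp [h]

end ExteriorAlgebra

theorem stmt_8_general {n : ℕ}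
    (b : OrthonormalBasis (Fin n) ℝ V) (i j : Fin n) (hij : i ≠ j) (m : ℕ)
    (hmap : ∀ x ∈ (⋀[ℝ]^m V : Submodule ℝ (ExteriorAlgebra ℝ V)),
      (K (b i) * K (b j)) x ∈ (⋀[ℝ]^m V : Submodule ℝ (ExteriorAlgebra ℝ V))) :
    LinearMap.trace ℝ (⋀[ℝ]^m V : Submodule ℝ (ExteriorAlgebra ℝ V))
        ((K (b i) * K (b j)).restrict hmap) =
      (if 2 ≤ m then ((n - 2).choose (m - 2) : ℝ) else 0) + ((n - 2).choose m : ℝ)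
        - 2 * (if 1 ≤ m then ((n - 2).choose (m - 1) : ℝ) else 0) := by
  let sign (k : Fin n) (t : Finset (Fin n)) : ℝ := if k ∈ t then 1 else -1
  have eigen (s : Set.powersetCard (Fin n) m) :
      (K (b i) * K (b j)).restrict hmap (b.toBasis.exteriorPower m s) =
        (sign i s.val * sign j s.val) • b.toBasis.exteriorPower m s := by
    have hBs : (b.toBasis.exteriorPower m s : ExteriorAlgebra ℝ V) =
        ExteriorAlgebra.ιMulti_family ℝ m b s := by simp
    ext
    rw [LinearMap.coe_restrict_apply, Submodule.coe_smul, hBs, Module.End.mul_apply,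
      K_ιMulti_family b.orthonormal, map_smul, K_ιMulti_family b.orthonormal, smul_smul, mul_comm]
  rw [LinearMap.trace_eq_sum_of_apply_basis _ _ _ eigen,
    ← Finset.sum_subtype (Finset.powersetCard m Finset.univ) (fun t => by simp)
      fun t => sign i t * sign j t,
    Finset.sum_powersetCard_sign_mul_sign (Finset.mem_univ i) (Finset.mem_univ j) hij,
    Finset.card_univ, Fintype.card_fin]
  have hn : 1 < n := by simpa using Fintype.one_lt_card_iff.mpr ⟨i, j, hij⟩
  obtain ⟨N, rfl⟩ : ∃ N, n = N + 2 := ⟨n - 2, by omega⟩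
  simpa using Nat.cast_choose_add_two_sub_four_mul_add_four_mul N m

/-- For an orthonormal basis `{e₁,…,eₙ}` (`n ≥ 2`) and `i ≠ j`, the trace of
`(ε(eᵢ)ι(eᵢ) - ι(eᵢ)ε(eᵢ))·(ε(eⱼ)ι(eⱼ) - ι(eⱼ)ε(eⱼ))` on the degree-`m` part `Λᵐ(V)`
equals `C(n-2, m-2) + C(n-2, m) - 2·C(n-2, m-1)` (binomial coefficient, `0` out of range). -/
theorem stmt_8 [FiniteDimensional ℝ V] {n : ℕ} (hn : 2 ≤ n)
    (b : OrthonormalBasis (Fin n) ℝ V) (i j : Fin n) (hij : i ≠ j) (m : ℕ)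
    (hmap : ∀ x ∈ (⋀[ℝ]^m V : Submodule ℝ (ExteriorAlgebra ℝ V)),
      (K (b i) * K (b j)) x ∈ (⋀[ℝ]^m V : Submodule ℝ (ExteriorAlgebra ℝ V))) :
    LinearMap.trace ℝ (⋀[ℝ]^m V : Submodule ℝ (ExteriorAlgebra ℝ V))
        ((K (b i) * K (b j)).restrict hmap) =
      (if 2 ≤ m then ((n - 2).choose (m - 2) : ℝ) else 0) + ((n - 2).choose m : ℝ)
        - 2 * (if 1 ≤ m then ((n - 2).choose (m - 1) : ℝ) else 0) :=
  stmt_8_general b i j hij m hmap
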